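/- arXiv:1810.10264 — 3 statements merged into one kernel-verified Lean document; each statement's English description precedes it below -/
import Mathlib

section
/- (Decomposition identity for mollified products.) For locally integrable functions $f, g$ on $\mathbb{T}^d$ (or $\mathbb{R}^d$), and $f^\varepsilon, g^\varepsilon$ their mollifications, the identity $(fg)^\varepsilon(x) - f^\varepsilon(x) g^\varepsilon(x) = R^\varepsilon(x) - (f^\varepsilon(x) - f(x))(g^\varepsilon(x) - g(x))$ holds for a.e. $x$, where $R^\varepsilon(x) = \int_{\mathbb{R}^d} (f(x-y)-f(x))(g(x-y)-g(x))\,\omega_\varepsilon(y)\,dy$. -/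
open MeasureTheory ENNReal Filter

noncomputable section

abbrev Ed (d : ℕ) := EuclideanSpace ℝ (Fin d)

/-- A standard mollifier on `ℝ^d`: smooth, nonnegative, supported in the closed
unit ball, with total integral one. -/
def IsStdMollifier {d : ℕ} (ω : Ed d → ℝ) : Prop :=
  ContDiff ℝ (⊤ : ℕ∞) ω ∧ (∀ x, 0 ≤ ω x) ∧ (∀ x : Ed d, 1 ≤ ‖x‖ → ω x = 0) ∧ (∫ x, ω x) = 1

/-- The rescaled mollifier `ω_ε(y) = ε^{-d} ω(y/ε)`. -/
def scaledMollifier {d : ℕ} (ω : Ed d → ℝ) (ε : ℝ) (y : Ed d) : ℝ :=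
  (ε ^ d)⁻¹ * ω (ε⁻¹ • y)

/-- Spatial mollification `f^ε(x) = ∫ f(x-y) ω_ε(y) dy`. -/
def mollify {d : ℕ} (ω : Ed d → ℝ) (ε : ℝ) (f : Ed d → ℝ) (x : Ed d) : ℝ :=
  ∫ y, f (x - y) * scaledMollifier ω ε y

/-- Fundamental domain `[0,1)^d` of the torus `𝕋^d = ℝ^d / ℤ^d`. -/
def cube (d : ℕ) : Set (Ed d) := {x | ∀ i, x i ∈ Set.Ico (0:ℝ) 1}

/-- `ℤ^d`-periodicity: a function on `ℝ^d` representing a function on `𝕋^d`. -/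
def ZPeriodic {d : ℕ} (f : Ed d → ℝ) : Prop :=
  ∀ (x : Ed d) (i : Fin d), f (x + EuclideanSpace.single i 1) = f x

/-- Mixed space-time norm `‖f‖_{L^p(0,T; L^q(μ))}` (spatial measure `μ`). -/
def mixedNorm {d : ℕ} (p q : ℝ≥0∞) (T : ℝ) (μ : Measure (Ed d)) (f : ℝ → Ed d → ℝ) : ℝ≥0∞ :=
  eLpNorm (fun t => (eLpNorm (f t) q μ).toReal) p (volume.restrict (Set.Ioo 0 T))

/-- A bounded domain with `C²` boundary, described as a sublevel set of a `C²`
defining function with nonvanishing gradient on the boundary. -/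
def HasC2Boundary {d : ℕ} (Ω : Set (Ed d)) : Prop :=
  ∃ F : Ed d → ℝ, ContDiff ℝ 2 F ∧ Ω = {x | F x < 0} ∧ ∀ x ∈ frontier Ω, fderiv ℝ F x ≠ 0

/-- `Ω_δ = {x ∈ Ω : d(x, ∂Ω) > δ}`. -/
def innerSet {d : ℕ} (Ω : Set (Ed d)) (δ : ℝ) : Set (Ed d) :=
  {x ∈ Ω | δ < Metric.infDist x (frontier Ω)}

/-- Constantin–E–Titi decomposition identity:
`(fg)^ε - f^ε g^ε = R^ε - (f^ε - f)(g^ε - g)` wherever the convolutions are defined. -/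
theorem constantin_e_titi_identity
    (d : ℕ) (ω : Ed d → ℝ) (hω : IsStdMollifier ω) (ε : ℝ) (hε : 0 < ε)
    (f g : Ed d → ℝ) (x : Ed d)
    (hf : Integrable (fun y => f (x - y) * scaledMollifier ω ε y))
    (hg : Integrable (fun y => g (x - y) * scaledMollifier ω ε y))
    (hfg : Integrable (fun y => f (x - y) * g (x - y) * scaledMollifier ω ε y)) :
    mollify ω ε (fun z => f z * g z) x - mollify ω ε f x * mollify ω ε g x =
      (∫ y, (f (x - y) - f x) * (g (x - y) - g x) * scaledMollifier ω ε y) -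
        (mollify ω ε f x - f x) * (mollify ω ε g x - g x) := by
  have hc : Continuous (scaledMollifier ω ε) :=
    continuous_const.mul (hω.1.continuous.comp (continuous_const_smul _))
  have hK : HasCompactSupport (scaledMollifier ω ε) := by
    apply HasCompactSupport.intro (isCompact_closedBall (0 : Ed d) ε)
    intro y hy
    simp only [Metric.mem_closedBall, dist_zero_right, not_le] at hy
    have : (1:ℝ) ≤ ‖ε⁻¹ • y‖ := by
      rw [norm_smul, norm_inv, Real.norm_of_nonneg hε.le]
      rw [inv_mul_eq_div, le_div_iff₀ hε, one_mul]
      exact hy.le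
    simp [scaledMollifier, hω.2.2.1 _ this]
  have hI : Integrable (scaledMollifier ω ε) := hc.integrable_of_hasCompactSupport hK
  have hint : (∫ y, scaledMollifier ω ε y) = 1 := by
    have := MeasureTheory.Measure.integral_comp_inv_smul_of_nonneg (volume : Measure (Ed d)) ω hε.le
    simp only [finrank_euclideanSpace_fin, smul_eq_mul] at this
    rw [show scaledMollifier ω ε = fun y => (ε ^ d)⁻¹ * ω (ε⁻¹ • y) from rfl,
      integral_const_mul, this, hω.2.2.2, mul_one,
      inv_mul_cancel₀ (pow_ne_zero _ hε.ne')]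
  have key : (fun y => (f (x - y) - f x) * (g (x - y) - g x) * scaledMollifier ω ε y) =
      fun y => f (x - y) * g (x - y) * scaledMollifier ω ε y
        - f x * (g (x - y) * scaledMollifier ω ε y)
        - g x * (f (x - y) * scaledMollifier ω ε y)
        + (f x * g x) * scaledMollifier ω ε y := by
    funext y; ring
  have h4 : Integrable (fun y => f x * g x * scaledMollifier ω ε y) := hI.const_mul _
  have h3 : Integrable (fun y => g x * (f (x - y) * scaledMollifier ω ε y)) := hf.const_mul _
  have h2 : Integrable (fun y => f x * (g (x - y) * scaledMollifier ω ε y)) := hg.const_mul _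
  have h1 : Integrable (fun y => f (x - y) * g (x - y) * scaledMollifier ω ε y
      - f x * (g (x - y) * scaledMollifier ω ε y)) := hfg.sub h2
  have h0 : Integrable (fun y => f (x - y) * g (x - y) * scaledMollifier ω ε y
      - f x * (g (x - y) * scaledMollifier ω ε y)
      - g x * (f (x - y) * scaledMollifier ω ε y)) := h1.sub h3
  rw [key, integral_add h0 h4, integral_sub h1 h3, integral_sub hfg h2,
    integral_const_mul, integral_const_mul, integral_const_mul, hint]
  simp only [mollify]
  ring
end
end

section
/- (Quantitative mollification-commutation with the pressure law via Besov regularity, 2D.) Let $p \in C^2(0,\infty)$, $0<c_1\leq \varrho \leq c_2 <\infty$ on $\mathbb{T}^2\times(0,T)$, and suppose $M := \sup_{t\in(0,T)}\sup_{0<|h|<\varepsilon_0} |h|^{-1/2}\|\varrho(\cdot+h,t)-\varrho(\cdot,t)\|_{L^2(\mathbb{T}^2)} < \infty$. Then for all $0<\varepsilon<\varepsilon_0$, $\|(p(\varrho))^\varepsilon - p(\varrho^\varepsilon)\|_{L^\infty(0,T;L^1(\mathbb{T}^2))} \leq C\Lambda M^2\,\varepsilon$, where $\Lambda = \sup_{[c_1,c_2]}|p''|$.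 -/
open MeasureTheory ENNReal Filter

noncomputable section

namespace PressureCommAux

open MeasureTheory ENNReal Filter

lemma taylor2 {p : ℝ → ℝ} (hp : ContDiffOn ℝ 2 p (Set.Ioi 0)) {c1 c2 Λ : ℝ}
    (hc1 : 0 < c1) (hΛ : ∀ ξ ∈ Set.Icc c1 c2, |iteratedDeriv 2 p ξ| ≤ Λ)
    {a b : ℝ} (ha : a ∈ Set.Icc c1 c2) (hb : b ∈ Set.Icc c1 c2) :
    |p b - p a - deriv p a * (b - a)| ≤ Λ * (b - a) ^ 2 := by
  have hsub : Set.Icc c1 c2 ⊆ Set.Ioi 0 := fun z hz => lt_of_lt_of_le hc1 hz.1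
  have huIcc : Set.uIcc a b ⊆ Set.Icc c1 c2 := Set.uIcc_subset_Icc ha hb
  have hIoi : Set.uIcc a b ⊆ Set.Ioi 0 := huIcc.trans hsub
  have hd1 : DifferentiableOn ℝ p (Set.Ioi 0) := hp.differentiableOn (by norm_num)
  have hd2' : ContDiffOn ℝ 1 (deriv p) (Set.Ioi 0) := hp.deriv_of_isOpen isOpen_Ioi (by norm_num)
  have hd2 : DifferentiableOn ℝ (deriv p) (Set.Ioi 0) := hd2'.differentiableOn (by norm_num)
  set g : ℝ → ℝ := fun u => p b - p u - deriv p u * (b - u) with hg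
  have hgderiv : ∀ u ∈ Set.uIcc a b,
      HasDerivWithinAt g (-(iteratedDeriv 2 p u * (b - u))) (Set.uIcc a b) u := by
    intro u hu
    have hu' : u ∈ Set.Ioi 0 := hIoi hu
    have h1 : HasDerivAt p (deriv p u) u :=
      (hd1.differentiableAt (isOpen_Ioi.mem_nhds hu')).hasDerivAt
    have h2 : HasDerivAt (deriv p) (iteratedDeriv 2 p u) u := by
      have := (hd2.differentiableAt (isOpen_Ioi.mem_nhds hu')).hasDerivAt
      rwa [show iteratedDeriv 2 p = deriv (deriv p) by
        rw [iteratedDeriv_succ, iteratedDeriv_one]]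
    have h3 : HasDerivAt (fun u => b - u) (-1) u := by
      simpa using (hasDerivAt_id u).const_sub b
    have h4 : HasDerivAt g
        (0 - deriv p u - (iteratedDeriv 2 p u * (b - u) + deriv p u * (-1))) u :=
      ((hasDerivAt_const u (p b)).sub h1).sub (h2.mul h3)
    have : (0 : ℝ) - deriv p u - (iteratedDeriv 2 p u * (b - u) + deriv p u * (-1))
        = -(iteratedDeriv 2 p u * (b - u)) := by ring
    exact (this ▸ h4).hasDerivWithinAt
  have hbound : ∀ u ∈ Set.uIcc a b, ‖-(iteratedDeriv 2 p u * (b - u))‖ ≤ Λ * |b - a| := by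
    intro u hu
    have h1 : |iteratedDeriv 2 p u| ≤ Λ := hΛ u (huIcc hu)
    have h2 : |b - u| ≤ |b - a| := by
      rw [Set.uIcc_eq_union] at hu
      rcases hu with hu | hu <;> rw [abs_le] <;> cases' abs_cases (b - a) with h h <;>
        constructor <;> nlinarith [hu.1, hu.2]
    calc ‖-(iteratedDeriv 2 p u * (b - u))‖ = |iteratedDeriv 2 p u| * |b - u| := by
          rw [norm_neg]; exact abs_mul _ _
      _ ≤ Λ * |b - a| := by
          apply mul_le_mul h1 h2 (abs_nonneg _)
          exact (abs_nonneg _).trans h1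
  have key := Convex.norm_image_sub_le_of_norm_hasDerivWithin_le hgderiv hbound
    (convex_uIcc a b) Set.right_mem_uIcc Set.left_mem_uIcc
  have hgb : g b = 0 := by simp [hg]
  have hga : g a = p b - p a - deriv p a * (b - a) := rfl
  rw [hga, hgb, sub_zero] at key
  calc |p b - p a - deriv p a * (b - a)| ≤ Λ * |b - a| * ‖a - b‖ := key
    _ = Λ * (b - a) ^ 2 := by
        rw [Real.norm_eq_abs, abs_sub_comm a b, mul_assoc, ← abs_mul]
        rw [show (b-a) * (b-a) = (b-a)^2 by ring, abs_pow, sq_abs]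

variable {ω : Ed 2 → ℝ} {ε : ℝ}

lemma sm_nonneg (hω : IsStdMollifier ω) (hε : 0 < ε) (y : Ed 2) :
    0 ≤ scaledMollifier ω ε y :=
  mul_nonneg (inv_nonneg.2 (pow_nonneg hε.le _)) (hω.2.1 _)

lemma sm_zero (hω : IsStdMollifier ω) (hε : 0 < ε) {y : Ed 2} (hy : ε ≤ ‖y‖) :
    scaledMollifier ω ε y = 0 := by
  have : (1:ℝ) ≤ ‖ε⁻¹ • y‖ := by
    rw [norm_smul, Real.norm_eq_abs, abs_of_pos (inv_pos.2 hε)]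
    rw [← div_eq_inv_mul, le_div_iff₀ hε, one_mul]
    exact hy
  simp [scaledMollifier, hω.2.2.1 _ this]

lemma sm_cont (hω : IsStdMollifier ω) : Continuous (scaledMollifier ω ε) :=
  continuous_const.mul (hω.1.continuous.comp (continuous_const_smul _))

lemma sm_integrable (hω : IsStdMollifier ω) (hε : 0 < ε) :
    Integrable (scaledMollifier ω ε) (volume : Measure (Ed 2)) := by
  apply (sm_cont hω).integrable_of_hasCompactSupport
  apply HasCompactSupport.intro (isCompact_closedBall (0 : Ed 2) ε)
  intro y hy
  apply sm_zero hω hε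
  have : ¬ ‖y‖ ≤ ε := by simpa [Metric.mem_closedBall, dist_zero_right] using hy
  linarith [lt_of_not_ge this]

lemma sm_integral (hω : IsStdMollifier ω) (hε : 0 < ε) :
    ∫ y, scaledMollifier ω ε y = 1 := by
  have h1 : ∫ y : Ed 2, ω (ε⁻¹ • y) = |ε ^ Module.finrank ℝ (Ed 2)| • ∫ y, ω y :=
    Measure.integral_comp_inv_smul volume ω ε
  rw [finrank_euclideanSpace_fin] at h1
  simp only [scaledMollifier]
  rw [MeasureTheory.integral_const_mul, h1, hω.2.2.2, smul_eq_mul, mul_one,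
    abs_of_pos (pow_pos hε 2)]
  simp [pow_ne_zero 2 hε.ne']

lemma translate_mp (x : Ed 2) :
    MeasurePreserving (fun y : Ed 2 => x - y) volume volume := by
  have : (fun y : Ed 2 => x - y) = (fun z : Ed 2 => x + z) ∘ Neg.neg := by
    funext y; simp [sub_eq_add_neg]
  rw [this]
  exact (measurePreserving_add_left volume x).comp (Measure.measurePreserving_neg volume)

lemma lintegral_sq_eq {f : Ed 2 → ℝ} (μ : Measure (Ed 2)) :
    ∫⁻ x, (‖f x‖₊ : ℝ≥0∞) ^ (2 : ℕ) ∂μ = (eLpNorm f 2 μ) ^ (2 : ℕ) := by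
  rw [eLpNorm_eq_lintegral_rpow_enorm_toReal (by norm_num) (by norm_num)]
  have h2 : (2 : ℝ≥0∞).toReal = (2 : ℝ) := by norm_num
  rw [h2]
  rw [← ENNReal.rpow_natCast _ 2, ← ENNReal.rpow_mul]
  norm_num
  rfl

end PressureCommAux

open PressureCommAux

/-- Quantitative mollification-commutation with the pressure law in 2D:
under the `B^{1/2,∞}_2` translation bound with constant `M`,
`‖(p(ϱ))^ε - p(ϱ^ε)‖_{L^∞(0,T;L¹(𝕋²))} ≤ C Λ M² ε`. -/
theorem pressure_commutation_L1_2d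
    (ω : Ed 2 → ℝ) (hω : IsStdMollifier ω) :
    ∃ C : ℝ, 0 < C ∧
      ∀ (p : ℝ → ℝ), ContDiffOn ℝ 2 p (Set.Ioi 0) →
      ∀ (c1 c2 Λ M ε₀ T : ℝ), 0 < c1 → c1 ≤ c2 → 0 ≤ Λ → 0 ≤ M → 0 < ε₀ → 0 < T →
        (∀ ξ ∈ Set.Icc c1 c2, |iteratedDeriv 2 p ξ| ≤ Λ) →
        ∀ ϱ : ℝ → Ed 2 → ℝ,
          (∀ t, ZPeriodic (ϱ t)) →
          (∀ t, AEStronglyMeasurable (ϱ t) volume) →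
          (∀ t x, ϱ t x ∈ Set.Icc c1 c2) →
          (∀ t ∈ Set.Ioo (0 : ℝ) T, ∀ h : Ed 2, 0 < ‖h‖ → ‖h‖ < ε₀ →
            eLpNorm (fun x => ϱ t (x + h) - ϱ t x) 2 (volume.restrict (cube 2)) ≤
              ENNReal.ofReal (M * ‖h‖ ^ ((1 : ℝ) / 2))) →
          ∀ ε : ℝ, 0 < ε → ε < ε₀ → ∀ t ∈ Set.Ioo (0 : ℝ) T,
            eLpNorm
                (fun x => mollify ω ε (fun y => p (ϱ t y)) x - p (mollify ω ε (ϱ t) x))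
                1 (volume.restrict (cube 2)) ≤
              ENNReal.ofReal (C * Λ * M ^ 2 * ε) := by
  refine ⟨2, two_pos, ?_⟩
  intro p hp c1 c2 Λ M ε₀ T hc1 hc12 hΛ0 hM0 hε₀ hT hΛ ϱ hper hmeas hbb hTrans ε hε hεε₀ t ht
  classical
  set g : Ed 2 → ℝ := ϱ t with hgdef
  set ωε : Ed 2 → ℝ := scaledMollifier ω ε with hωεdef
  set μc : Measure (Ed 2) := volume.restrict (cube 2) with hμc
  have hgm : AEStronglyMeasurable g volume := hmeas t
  have hgb : ∀ x, g x ∈ Set.Icc c1 c2 := hbb t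
  have hωnn : ∀ y, 0 ≤ ωε y := sm_nonneg hω hε
  have hωint : Integrable ωε volume := sm_integrable hω hε
  have hωone : ∫ y, ωε y = 1 := sm_integral hω hε
  have htr : ∀ x : Ed 2, AEStronglyMeasurable (fun y => g (x - y)) volume :=
    fun x => hgm.comp_measurePreserving (translate_mp x)
  have hsub : Set.Icc c1 c2 ⊆ Set.Ioi 0 := fun z hz => lt_of_lt_of_le hc1 hz.1
  have hpc : ContinuousOn p (Set.Icc c1 c2) := (hp.continuousOn).mono hsub
  obtain ⟨Kp, hKp⟩ := (isCompact_Icc (a := c1) (b := c2)).exists_bound_of_continuousOn hpc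
  have hgabs : ∀ z, ‖g z‖ ≤ c2 := fun z => by
    rw [Real.norm_eq_abs, abs_le]
    exact ⟨by linarith [(hgb z).1], (hgb z).2⟩
  have hΔabs : ∀ x y, ‖g (x - y) - g x‖ ≤ 2 * c2 := fun x y =>
    (norm_sub_le _ _).trans (by linarith [hgabs (x - y), hgabs x])
  have int2 : ∀ x, Integrable (fun y => g (x - y) * ωε y) volume := fun x =>
    hωint.bdd_mul (c := c2) (htr x) (Eventually.of_forall fun y => hgabs _)
  obtain ⟨q, hq⟩ := ContinuousMap.exists_restrict_eq (isClosed_Icc (a := c1) (b := c2))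
    ⟨(Set.Icc c1 c2).restrict p, hpc.restrict⟩
  have hqp : ∀ z ∈ Set.Icc c1 c2, q z = p z := fun z hz =>
    congrFun (congrArg ContinuousMap.toFun hq) ⟨z, hz⟩
  have int1 : ∀ x, Integrable (fun y => p (g (x - y)) * ωε y) volume := fun x => by
    have : (fun y => p (g (x - y)) * ωε y) = fun y => q (g (x - y)) * ωε y := by
      funext y; rw [hqp _ (hgb _)]
    rw [this]
    refine hωint.bdd_mul (c := Kp) (q.continuous.comp_aestronglyMeasurable (htr x))
      (Eventually.of_forall fun y => ?_)
    rw [hqp _ (hgb _)]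
    exact hKp _ (hgb _)
  have hΔm : ∀ x, AEStronglyMeasurable (fun y => g (x - y) - g x) volume :=
    fun x => (htr x).sub aestronglyMeasurable_const
  have int4 : ∀ x, Integrable (fun y => (g (x - y) - g x) * ωε y) volume := fun x =>
    hωint.bdd_mul (c := 2 * c2) (hΔm x) (Eventually.of_forall fun y => hΔabs x y)
  have int3 : ∀ x, Integrable (fun y => (g (x - y) - g x) ^ 2 * ωε y) volume := fun x => by
    refine hωint.bdd_mul (c := (2 * c2) ^ 2) ?_ (Eventually.of_forall fun y => ?_)
    · simpa only [pow_two, Pi.mul_def] using (hΔm x).mul (hΔm x)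
    · rw [Real.norm_eq_abs, abs_pow, ← Real.norm_eq_abs]
      exact pow_le_pow_left₀ (norm_nonneg _) (hΔabs x y) 2
  set m : Ed 2 → ℝ := mollify ω ε g with hm
  have hmval : ∀ x, m x = ∫ y, g (x - y) * ωε y := fun x => rfl
  have hconst : ∀ c : ℝ, ∫ y, c * ωε y = c := fun c => by
    rw [MeasureTheory.integral_const_mul, hωone, mul_one]
  have hmb : ∀ x, m x ∈ Set.Icc c1 c2 := by
    intro x
    constructor
    · calc c1 = ∫ y, c1 * ωε y := (hconst c1).symm
        _ ≤ ∫ y, g (x - y) * ωε y := integral_mono (hωint.const_mul c1) (int2 x)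
            (fun y => mul_le_mul_of_nonneg_right (hgb _).1 (hωnn y))
        _ = m x := (hmval x).symm
    · calc m x = ∫ y, g (x - y) * ωε y := hmval x
        _ ≤ ∫ y, c2 * ωε y := integral_mono (int2 x) (hωint.const_mul c2)
            (fun y => mul_le_mul_of_nonneg_right (hgb _).2 (hωnn y))
        _ = c2 := hconst c2
  have hmsub : ∀ x, ∫ y, (g (x - y) - g x) * ωε y = m x - g x := by
    intro x
    have hsp : (fun y => (g (x - y) - g x) * ωε y)
        = fun y => g (x - y) * ωε y - g x * ωε y := by funext y; ring
    rw [hsp, integral_sub (int2 x) (hωint.const_mul _), hconst, hmval]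
  set J : Ed 2 → ℝ := fun x => ∫ y, (g (x - y) - g x) ^ 2 * ωε y with hJ
  have hJnn : ∀ x, 0 ≤ J x := fun x =>
    integral_nonneg fun y => mul_nonneg (sq_nonneg _) (hωnn y)
  have hJensen : ∀ x, (m x - g x) ^ 2 ≤ J x := by
    intro x
    have h0 : 0 ≤ ∫ y, (g (x - y) - g x - (m x - g x)) ^ 2 * ωε y :=
      integral_nonneg fun y => mul_nonneg (sq_nonneg _) (hωnn y)
    have hsplit : (fun y => (g (x - y) - g x - (m x - g x)) ^ 2 * ωε y)
        = fun y => ((g (x - y) - g x) ^ 2 * ωε y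
            - (2 * (m x - g x)) * ((g (x - y) - g x) * ωε y))
            + (m x - g x) ^ 2 * ωε y := by funext y; ring
    have i1 : Integrable (fun y => (g (x - y) - g x) ^ 2 * ωε y
        - 2 * (m x - g x) * ((g (x - y) - g x) * ωε y)) volume :=
      (int3 x).sub ((int4 x).const_mul (2 * (m x - g x)))
    have i2 : Integrable (fun y => (m x - g x) ^ 2 * ωε y) volume :=
      hωint.const_mul ((m x - g x) ^ 2)
    have i3 : Integrable (fun y => 2 * (m x - g x) * ((g (x - y) - g x) * ωε y)) volume :=
      (int4 x).const_mul (2 * (m x - g x))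
    rw [hsplit, integral_add i1 i2, integral_sub (int3 x) i3,
      MeasureTheory.integral_const_mul, MeasureTheory.integral_const_mul,
      hmsub, hωone] at h0
    nlinarith [h0]
  have htay : ∀ a b : ℝ, a ∈ Set.Icc c1 c2 → b ∈ Set.Icc c1 c2 →
      |p b - p a - deriv p a * (b - a)| ≤ Λ * (b - a) ^ 2 :=
    fun a b ha hb => taylor2 hp hc1 hΛ ha hb
  have hpoint : ∀ x, |mollify ω ε (fun z => p (g z)) x - p (m x)| ≤ 2 * Λ * J x := by
    intro x
    have e2 : mollify ω ε (fun z => p (g z)) x = ∫ y, p (g (x - y)) * ωε y := rfl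
    have hsplit : (fun y => (p (g (x - y)) - p (g x)
          - deriv p (g x) * (g (x - y) - g x)) * ωε y)
        = fun y => p (g (x - y)) * ωε y - p (g x) * ωε y
            - deriv p (g x) * ((g (x - y) - g x) * ωε y) := by funext y; ring
    have intR : Integrable (fun y => (p (g (x - y)) - p (g x)
        - deriv p (g x) * (g (x - y) - g x)) * ωε y) volume := by
      rw [hsplit]
      exact ((int1 x).sub (hωint.const_mul (p (g x)))).sub
        ((int4 x).const_mul (deriv p (g x)))
    have eA : ∫ y, (p (g (x - y)) - p (g x) - deriv p (g x) * (g (x - y) - g x)) * ωε y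
        = mollify ω ε (fun z => p (g z)) x - p (g x) - deriv p (g x) * (m x - g x) := by
      have i1 : Integrable (fun y => p (g (x - y)) * ωε y - p (g x) * ωε y) volume :=
        (int1 x).sub (hωint.const_mul (p (g x)))
      have i2 : Integrable (fun y => deriv p (g x) * ((g (x - y) - g x) * ωε y)) volume :=
        (int4 x).const_mul (deriv p (g x))
      rw [hsplit, integral_sub i1 i2, integral_sub (int1 x) (hωint.const_mul (p (g x))),
        hconst, MeasureTheory.integral_const_mul, hmsub, e2]
    have hAbs : |∫ y, (p (g (x - y)) - p (g x)
        - deriv p (g x) * (g (x - y) - g x)) * ωε y| ≤ Λ * J x := by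
      calc |∫ y, (p (g (x - y)) - p (g x) - deriv p (g x) * (g (x - y) - g x)) * ωε y|
          ≤ ∫ y, |(p (g (x - y)) - p (g x) - deriv p (g x) * (g (x - y) - g x)) * ωε y| := by
            simpa only [Real.norm_eq_abs] using norm_integral_le_integral_norm
              (μ := volume)
              (fun y => (p (g (x - y)) - p (g x) - deriv p (g x) * (g (x - y) - g x)) * ωε y)
        _ ≤ ∫ y, Λ * ((g (x - y) - g x) ^ 2 * ωε y) := by
            apply integral_mono intR.abs ((int3 x).const_mul Λ)
            intro y
            dsimp only
            rw [abs_mul, abs_of_nonneg (hωnn y), ← mul_assoc]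
            exact mul_le_mul_of_nonneg_right (htay (g x) (g (x - y)) (hgb x) (hgb _)) (hωnn y)
        _ = Λ * J x := MeasureTheory.integral_const_mul Λ _
    have hB : |p (m x) - p (g x) - deriv p (g x) * (m x - g x)| ≤ Λ * J x :=
      (htay (g x) (m x) (hgb x) (hmb x)).trans
        (mul_le_mul_of_nonneg_left (hJensen x) hΛ0)
    have ecomb : mollify ω ε (fun z => p (g z)) x - p (m x)
        = (∫ y, (p (g (x - y)) - p (g x) - deriv p (g x) * (g (x - y) - g x)) * ωε y)
          - (p (m x) - p (g x) - deriv p (g x) * (m x - g x)) := by rw [eA]; ring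
    rw [ecomb]
    calc |_ - _| ≤ |∫ y, (p (g (x - y)) - p (g x)
          - deriv p (g x) * (g (x - y) - g x)) * ωε y|
          + |p (m x) - p (g x) - deriv p (g x) * (m x - g x)| := abs_sub _ _
      _ ≤ Λ * J x + Λ * J x := add_le_add hAbs hB
      _ = 2 * Λ * J x := by ring
  -- the key integral bound
  have hkey : ∫⁻ x, ENNReal.ofReal (J x) ∂μc ≤ ENNReal.ofReal (M ^ 2 * ε) := by
    have hJrw : ∀ x, ENNReal.ofReal (J x)
        = ∫⁻ y, ENNReal.ofReal ((g (x - y) - g x) ^ 2 * ωε y) :=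
      fun x => ofReal_integral_eq_lintegral_ofReal (int3 x)
        (Eventually.of_forall fun y => mul_nonneg (sq_nonneg _) (hωnn y))
    have hF : AEMeasurable (Function.uncurry fun x y =>
        ENNReal.ofReal ((g (x - y) - g x) ^ 2 * ωε y)) (μc.prod volume) := by
      have qsub : Measure.QuasiMeasurePreserving (fun z : Ed 2 × Ed 2 => z.1 - z.2)
          (μc.prod volume) volume := by
        have q1 : MeasurePreserving (fun z : Ed 2 × Ed 2 => (z.1 - z.2, z.2))
            (volume.prod volume) (volume.prod volume) := measurePreserving_sub_prod _ _
        have q2 : Measure.QuasiMeasurePreserving (Prod.fst : Ed 2 × Ed 2 → Ed 2)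
            (volume.prod volume) volume := Measure.quasiMeasurePreserving_fst
        have qac : μc.prod (volume : Measure (Ed 2)) ≪ volume.prod volume :=
          Measure.AbsolutelyContinuous.prod Measure.restrict_le_self.absolutelyContinuous
            Measure.AbsolutelyContinuous.rfl
        exact ((q2.comp q1.quasiMeasurePreserving).mono_left qac)
      have qfst : Measure.QuasiMeasurePreserving (Prod.fst : Ed 2 × Ed 2 → Ed 2)
          (μc.prod volume) volume :=
        Measure.quasiMeasurePreserving_fst.mono_right
          Measure.restrict_le_self.absolutelyContinuous
      have h1 : AEMeasurable (fun z : Ed 2 × Ed 2 => g (z.1 - z.2)) (μc.prod volume) :=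
        hgm.aemeasurable.comp_quasiMeasurePreserving qsub
      have h2 : AEMeasurable (fun z : Ed 2 × Ed 2 => g z.1) (μc.prod volume) :=
        hgm.aemeasurable.comp_quasiMeasurePreserving qfst
      have h3 : AEMeasurable (fun z : Ed 2 × Ed 2 => ωε z.2) (μc.prod volume) :=
        ((sm_cont hω).measurable.comp measurable_snd).aemeasurable
      exact (measurable_ofReal.comp_aemeasurable
        ((((h1.sub h2).pow aemeasurable_const).mul h3)))
    calc ∫⁻ x, ENNReal.ofReal (J x) ∂μc
        = ∫⁻ x, ∫⁻ y, ENNReal.ofReal ((g (x - y) - g x) ^ 2 * ωε y) ∂volume ∂μc := by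
          simp_rw [hJrw]
      _ = ∫⁻ y, ∫⁻ x, ENNReal.ofReal ((g (x - y) - g x) ^ 2 * ωε y) ∂μc ∂volume :=
          lintegral_lintegral_swap hF
      _ ≤ ∫⁻ y, ENNReal.ofReal (ωε y) * ENNReal.ofReal (M ^ 2 * ε) ∂volume := by
          apply lintegral_mono
          intro y
          dsimp only
          have step : ∫⁻ x, ENNReal.ofReal ((g (x - y) - g x) ^ 2 * ωε y) ∂μc
              = ENNReal.ofReal (ωε y)
                * ∫⁻ x, ENNReal.ofReal ((g (x - y) - g x) ^ 2) ∂μc := by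
            simp_rw [ENNReal.ofReal_mul' (hωnn y), mul_comm _ (ENNReal.ofReal (ωε y))]
            exact lintegral_const_mul' _ _ ENNReal.ofReal_ne_top
          rcases eq_or_ne y 0 with rfl | hy0
          · rw [step]
            simp
          rcases le_or_gt ε ‖y‖ with hyε | hyε
          · have hz : ωε y = 0 := by rw [hωεdef]; exact sm_zero hω hε hyε
            rw [step, hz]
            simp
          · have h1 : 0 < ‖y‖ := norm_pos_iff.2 hy0
            have key := hTrans t ht (-y) (by simpa using h1)
              (by rw [norm_neg]; exact hyε.trans hεε₀)
            have erw : (fun x => ϱ t (x + -y) - ϱ t x) = fun x => g (x - y) - g x := by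
              funext x; rw [← sub_eq_add_neg, ← hgdef]
            rw [erw] at key
            have hsq : ∫⁻ x, ENNReal.ofReal ((g (x - y) - g x) ^ 2) ∂μc
                ≤ ENNReal.ofReal (M ^ 2 * ε) := by
              have e : ∀ r : ℝ, ENNReal.ofReal (r ^ 2) = (‖r‖₊ : ℝ≥0∞) ^ (2:ℕ) := fun r => by
                rw [← enorm_eq_nnnorm, Real.enorm_eq_ofReal_abs, ← ENNReal.ofReal_pow (abs_nonneg r), sq_abs]
              simp_rw [e]
              rw [lintegral_sq_eq]
              calc (eLpNorm (fun x => g (x - y) - g x) 2 μc) ^ (2:ℕ)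
                  ≤ (ENNReal.ofReal (M * ‖-y‖ ^ ((1:ℝ)/2))) ^ (2:ℕ) := by gcongr
                _ = ENNReal.ofReal (M ^ 2 * ‖y‖) := by
                    rw [← ENNReal.ofReal_pow (by positivity), norm_neg]
                    congr 1
                    rw [mul_pow, ← Real.rpow_natCast (‖y‖ ^ ((1:ℝ)/2)) 2,
                      ← Real.rpow_mul (norm_nonneg y)]
                    norm_num
                _ ≤ ENNReal.ofReal (M ^ 2 * ε) :=
                    ENNReal.ofReal_le_ofReal
                      (mul_le_mul_of_nonneg_left hyε.le (sq_nonneg M))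
            rw [step]
            exact mul_le_mul_right hsq _
      _ = ENNReal.ofReal (M ^ 2 * ε) := by
          simp_rw [mul_comm (ENNReal.ofReal _) (ENNReal.ofReal (M ^ 2 * ε))]
          rw [lintegral_const_mul' _ _ ENNReal.ofReal_ne_top,
            ← ofReal_integral_eq_lintegral_ofReal hωint
              (Eventually.of_forall fun y => hωnn y), hωone]
          simp
  -- conclusion
  rw [eLpNorm_one_eq_lintegral_enorm]
  calc ∫⁻ x, (‖mollify ω ε (fun z => p (g z)) x - p (m x)‖₊ : ℝ≥0∞) ∂μc
      ≤ ∫⁻ x, ENNReal.ofReal (2 * Λ) * ENNReal.ofReal (J x) ∂μc := by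
        apply lintegral_mono
        intro x
        dsimp only
        rw [← enorm_eq_nnnorm, Real.enorm_eq_ofReal_abs, ← ENNReal.ofReal_mul (by positivity)]
        exact ENNReal.ofReal_le_ofReal (hpoint x)
    _ = ENNReal.ofReal (2 * Λ) * ∫⁻ x, ENNReal.ofReal (J x) ∂μc :=
        lintegral_const_mul' _ _ ENNReal.ofReal_ne_top
    _ ≤ ENNReal.ofReal (2 * Λ) * ENNReal.ofReal (M ^ 2 * ε) := mul_le_mul_right hkey _
    _ = ENNReal.ofReal (2 * Λ * M ^ 2 * ε) := by
        rw [← ENNReal.ofReal_mul (by positivity)]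
        ring_nf
end
end

section
/- (Quantitative mollification-commutation with the pressure law, 3D, $L^{6/5}$ version.) Let $p \in C^2(0,\infty)$, $0<c_1\leq\varrho\leq c_2<\infty$ on $\mathbb{T}^3\times(0,T)$, and suppose $M := \sup_{t\in(0,T)}\sup_{0<|h|<\varepsilon_0}|h|^{-1/2}\|\varrho(\cdot+h,t)-\varrho(\cdot,t)\|_{L^{12/5}(\mathbb{T}^3)} < \infty$. Then for all $0<\varepsilon<\varepsilon_0$: $\|(p(\varrho))^\varepsilon - p(\varrho^\varepsilon)\|_{L^\infty(0,T;L^{6/5}(\mathbb{T}^3))} \leq C\, M^2\, \varepsilon$, with $C$ depending on $c_1,c_2,p$ and the mollifier. -/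
open MeasureTheory ENNReal Filter

noncomputable section

/-! ### Auxiliary lemmas -/

/-- Taylor bound: second order remainder controlled by sup of second derivative. -/
lemma taylor_bound (p : ℝ → ℝ) (hp : ContDiffOn ℝ 2 p (Set.Ioi 0))
    (c1 c2 : ℝ) (hc1 : 0 < c1) (hc12 : c1 ≤ c2) :
    ∃ Λ : ℝ, 0 ≤ Λ ∧ ∀ a ∈ Set.Icc c1 c2, ∀ b ∈ Set.Icc c1 c2,
      |p a - p b - deriv p b * (a - b)| ≤ Λ * (a - b) ^ 2 := by
  have hsub : Set.Icc c1 c2 ⊆ Set.Ioi 0 := fun x hx => lt_of_lt_of_le hc1 hx.1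
  have hp1 : ContDiffOn ℝ 1 (deriv p) (Set.Ioi 0) :=
    hp.deriv_of_isOpen isOpen_Ioi (by norm_num)
  have hd1 : ∀ s ∈ Set.Icc c1 c2, HasDerivAt p (deriv p s) s := by
    intro s hs
    exact ((hp.differentiableOn (by norm_num)).differentiableAt
      (isOpen_Ioi.mem_nhds (hsub hs))).hasDerivAt
  have hd2 : ∀ s ∈ Set.Icc c1 c2, HasDerivAt (deriv p) (deriv (deriv p) s) s := by
    intro s hs
    exact ((hp1.differentiableOn (by norm_num)).differentiableAt
      (isOpen_Ioi.mem_nhds (hsub hs))).hasDerivAt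
  have hcont : ContinuousOn (deriv (deriv p)) (Set.Icc c1 c2) :=
    ((hp1.deriv_of_isOpen isOpen_Ioi (m := 0) (by norm_num)).continuousOn).mono hsub
  obtain ⟨Λ₀, hΛ₀⟩ := (isCompact_Icc (a := c1) (b := c2)).exists_bound_of_continuousOn hcont
  refine ⟨max Λ₀ 0, le_max_right _ _, ?_⟩
  intro a ha b hb
  set Λ := max Λ₀ 0 with hΛdef
  have hΛ : ∀ s ∈ Set.Icc c1 c2, |deriv (deriv p) s| ≤ Λ := fun s hs =>
    le_trans (by simpa using hΛ₀ s hs) (le_max_left _ _)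
  have huIccIcc : ∀ u v : ℝ, u ∈ Set.Icc c1 c2 → v ∈ Set.Icc c1 c2 →
      Set.uIcc u v ⊆ Set.Icc c1 c2 := by
    intro u v hu hv
    exact Set.uIcc_subset_Icc hu hv
  have inner : ∀ s ∈ Set.Icc c1 c2, |deriv p s - deriv p b| ≤ Λ * |s - b| := by
    intro s hs
    have hsub2 : Set.uIcc s b ⊆ Set.Icc c1 c2 := huIccIcc s b hs hb
    have := (convex_uIcc s b).norm_image_sub_le_of_norm_hasDerivWithin_le
      (f := deriv p) (f' := fun u => deriv (deriv p) u) (C := Λ)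
      (fun u hu => (hd2 u (hsub2 hu)).hasDerivWithinAt)
      (fun u hu => by simpa [Real.norm_eq_abs] using hΛ u (hsub2 hu))
      (Set.right_mem_uIcc) (Set.left_mem_uIcc)
    simpa [Real.norm_eq_abs] using this
  have hsub2 : Set.uIcc a b ⊆ Set.Icc c1 c2 := huIccIcc a b ha hb
  have houter := (convex_uIcc a b).norm_image_sub_le_of_norm_hasDerivWithin_le
    (f := fun u => p u - p b - deriv p b * (u - b))
    (f' := fun u => deriv p u - deriv p b) (C := Λ * |a - b|)
    (fun u hu => by
      have h1 : HasDerivAt (fun u => p u - p b - deriv p b * (u - b))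
          (deriv p u - deriv p b) u := by
        have := ((hd1 u (hsub2 hu)).sub_const (p b)).sub
          (((hasDerivAt_id u).sub_const b).const_mul (deriv p b))
        simp only [mul_one] at this
        exact this
      exact h1.hasDerivWithinAt)
    (fun u hu => by
      have h1 : |u - b| ≤ |a - b| := by
        rcases le_total a b with h | h
        · rw [Set.uIcc_of_le h] at hu
          rw [abs_of_nonpos (by linarith [hu.2]), abs_of_nonpos (by linarith)]
          linarith [hu.1]
        · rw [Set.uIcc_of_ge h] at hu
          rw [abs_of_nonneg (by linarith [hu.1]), abs_of_nonneg (by linarith)]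
          linarith [hu.2]
      calc ‖deriv p u - deriv p b‖ ≤ Λ * |u - b| := by
            simpa [Real.norm_eq_abs] using inner u (hsub2 hu)
        _ ≤ Λ * |a - b| := by
            apply mul_le_mul_of_nonneg_left h1 (le_max_right _ _))
    (Set.right_mem_uIcc) (Set.left_mem_uIcc)
  have h2 : |p a - p b - deriv p b * (a - b)| ≤ Λ * |a - b| * |a - b| := by
    simpa [Real.norm_eq_abs] using houter
  calc |p a - p b - deriv p b * (a - b)| ≤ Λ * |a - b| * |a - b| := h2
    _ = Λ * (a - b) ^ 2 := by rw [mul_assoc, abs_mul_abs_self, sq]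

section Moll
variable {ω : Ed 3 → ℝ} (hω : IsStdMollifier ω) {ε : ℝ} (hε : 0 < ε)
include hω hε

omit hε in
include hω in
lemma moll_cont : Continuous (scaledMollifier ω ε) :=
  continuous_const.mul (hω.1.continuous.comp (continuous_const_smul _))

lemma moll_nonneg (y : Ed 3) : 0 ≤ scaledMollifier ω ε y :=
  mul_nonneg (inv_nonneg.2 (pow_nonneg hε.le _)) (hω.2.1 _)

lemma moll_zero (y : Ed 3) (hy : ε ≤ ‖y‖) : scaledMollifier ω ε y = 0 := by
  have h1 : (1:ℝ) ≤ ‖ε⁻¹ • y‖ := by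
    rw [norm_smul, Real.norm_eq_abs, abs_of_nonneg (inv_nonneg.2 hε.le)]
    calc (1:ℝ) = ε⁻¹ * ε := by field_simp
      _ ≤ ε⁻¹ * ‖y‖ := by gcongr
  simp [scaledMollifier, hω.2.2.1 _ h1]

lemma moll_integrable : Integrable (scaledMollifier ω ε) := by
  apply (moll_cont hω).integrable_of_hasCompactSupport
  apply HasCompactSupport.intro (isCompact_closedBall (0 : Ed 3) ε)
  intro y hy
  have : ε < ‖y‖ := by simpa [Metric.mem_closedBall, dist_eq_norm, not_le] using hy
  exact moll_zero hω hε y this.le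

lemma moll_integral : (∫ y, scaledMollifier ω ε y) = 1 := by
  have h3 : Module.finrank ℝ (Ed 3) = 3 := by simp
  have hcs := Measure.integral_comp_smul (volume : Measure (Ed 3)) ω ε⁻¹
  rw [h3] at hcs
  have h4 : (∫ y, scaledMollifier ω ε y) = (ε ^ 3)⁻¹ * ∫ y, ω (ε⁻¹ • y) := by
    simp only [scaledMollifier]
    rw [integral_const_mul]
  rw [h4, hcs, hω.2.2.2]
  rw [inv_pow, inv_inv, abs_of_nonneg (pow_nonneg hε.le _)]
  simp only [smul_eq_mul, mul_one]
  field_simp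

lemma sq_diff_integrable (f : Ed 3 → ℝ) (hfm : AEStronglyMeasurable f volume)
    {c1 c2 : ℝ} (hfb : ∀ x, f x ∈ Set.Icc c1 c2) (x : Ed 3) :
    Integrable (fun y => (f (x - y) - f x)^2 * scaledMollifier ω ε y) volume := by
  have hum : AEStronglyMeasurable (fun y => f (x - y)) volume :=
    hfm.comp_quasiMeasurePreserving
      (Measure.measurePreserving_sub_left (volume : Measure (Ed 3)) x).quasiMeasurePreserving
  apply (moll_integrable hω hε).bdd_mul (c := (c2 - c1)^2)
    (((hum.sub aestronglyMeasurable_const)).pow 2)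
  refine ae_of_all _ fun y => ?_
  show ‖(f (x - y) - f x)^2‖ ≤ (c2 - c1)^2
  rw [Real.norm_eq_abs, abs_of_nonneg (sq_nonneg _), ← sq_abs (f (x - y) - f x)]
  apply pow_le_pow_left₀ (abs_nonneg _)
  have h1 := hfb (x - y); have h2 := hfb x
  rw [abs_sub_le_iff]; constructor <;> linarith [h1.1, h1.2, h2.1, h2.2]

end Moll

lemma pointwise_bound {ω : Ed 3 → ℝ} (hω : IsStdMollifier ω) {ε : ℝ} (hε : 0 < ε)
    (p : ℝ → ℝ) {c1 c2 : ℝ}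
    {K : ℝ} (hpb : ∀ s ∈ Set.Icc c1 c2, |p s| ≤ K)
    {Λ : ℝ} (hΛ : 0 ≤ Λ)
    (hT : ∀ a ∈ Set.Icc c1 c2, ∀ b ∈ Set.Icc c1 c2,
      |p a - p b - deriv p b * (a - b)| ≤ Λ * (a - b)^2)
    (f : Ed 3 → ℝ) (hfm : AEStronglyMeasurable f volume)
    (hpfm : AEStronglyMeasurable (fun y => p (f y)) volume)
    (hfb : ∀ x, f x ∈ Set.Icc c1 c2)
    (x : Ed 3) :
    |mollify ω ε (fun y => p (f y)) x - p (mollify ω ε f x)| ≤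
      Λ * ∫ y, (f (x - y) - f x)^2 * scaledMollifier ω ε y := by
  set W := scaledMollifier ω ε with hWdef
  have hWint := moll_integrable hω hε
  have hWnn := moll_nonneg hω hε
  have hW1 := moll_integral hω hε
  have hqmp := (Measure.measurePreserving_sub_left (volume : Measure (Ed 3)) x).quasiMeasurePreserving
  set u := fun y => f (x - y) with hudef
  have hum : AEStronglyMeasurable u volume := hfm.comp_quasiMeasurePreserving hqmp
  have hub : ∀ y, u y ∈ Set.Icc c1 c2 := fun y => hfb _
  have key : ∀ (g : Ed 3 → ℝ), AEStronglyMeasurable g volume → (∃ C, ∀ y, |g y| ≤ C) →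
      Integrable (fun y => g y * W y) := by
    intro g hg ⟨C, hC⟩
    exact hWint.bdd_mul (c := C) hg (ae_of_all _ fun y => by simpa [Real.norm_eq_abs] using hC y)
  have hconst : ∀ c : ℝ, (∫ y, c * W y) = c := by
    intro c; rw [integral_const_mul, hW1, mul_one]
  have hub' : ∃ C, ∀ y, |u y| ≤ C :=
    ⟨max |c1| |c2|, fun y => abs_le_max_abs_abs (hub y).1 (hub y).2⟩
  have huW : Integrable (fun y => u y * W y) := key u hum hub'
  have hmeq : mollify ω ε f x = ∫ y, u y * W y := rfl
  set m := mollify ω ε f x with hmdef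
  have hmIcc : m ∈ Set.Icc c1 c2 := by
    constructor
    · calc c1 = ∫ y, c1 * W y := (hconst c1).symm
        _ ≤ ∫ y, u y * W y := by
            apply integral_mono (key _ aestronglyMeasurable_const ⟨|c1|, fun y => le_refl _⟩) huW
            exact fun y => mul_le_mul_of_nonneg_right (hub y).1 (hWnn y)
        _ = m := hmeq.symm
    · calc m = ∫ y, u y * W y := hmeq
        _ ≤ ∫ y, c2 * W y := by
            apply integral_mono huW (key _ aestronglyMeasurable_const ⟨|c2|, fun y => le_refl _⟩)
            exact fun y => mul_le_mul_of_nonneg_right (hub y).2 (hWnn y)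
        _ = c2 := hconst c2
  have hpu : AEStronglyMeasurable (fun y => p (u y)) volume :=
    hpfm.comp_quasiMeasurePreserving hqmp
  have hpuW : Integrable (fun y => p (u y) * W y) :=
    key _ hpu ⟨K, fun y => hpb _ (hub y)⟩
  have humW : Integrable (fun y => (u y - m) * W y) := by
    apply key _ (hum.sub aestronglyMeasurable_const)
    obtain ⟨C, hC⟩ := hub'
    exact ⟨C + |m|, fun y => (abs_sub _ _).trans (by gcongr; exact hC y)⟩
  have hmz : (∫ y, (u y - m) * W y) = 0 := by
    have h1 : (fun y => (u y - m) * W y) = fun y => u y * W y - m * W y := by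
      funext y; ring
    rw [h1, integral_sub huW (key _ aestronglyMeasurable_const ⟨|m|, fun y => le_refl _⟩),
      hconst m, ← hmeq, sub_self]
  set R := fun s : ℝ => p s - p m - deriv p m * (s - m) with hRdef
  have hRb : ∀ s ∈ Set.Icc c1 c2, |R s| ≤ Λ * (s - m)^2 := fun s hs => hT s hs m hmIcc
  have hRuAesm : AEStronglyMeasurable (fun y => R (u y)) volume := by
    apply ((hpu.sub aestronglyMeasurable_const).sub
      ((hum.sub aestronglyMeasurable_const).const_mul (deriv p m)))
  have hsqAesm : AEStronglyMeasurable (fun y => (u y - m)^2) volume :=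
    (hum.sub aestronglyMeasurable_const).pow 2
  have hsubIcc : ∀ y, |u y - m| ≤ c2 - c1 := by
    intro y
    have h1 := hub y; have h2 := hmIcc
    rw [abs_sub_le_iff]; constructor <;> linarith [h1.1, h1.2, h2.1, h2.2]
  have hsq : ∀ y, (u y - m)^2 ≤ (c2 - c1)^2 := by
    intro y
    rw [← sq_abs (u y - m)]
    exact pow_le_pow_left₀ (abs_nonneg _) (hsubIcc y) 2
  have hsqb : ∀ y, |(u y - m)^2| ≤ (c2 - c1)^2 := fun y => by
    rw [abs_of_nonneg (sq_nonneg _)]; exact hsq y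
  have hsqW : Integrable (fun y => (u y - m)^2 * W y) := key _ hsqAesm ⟨(c2-c1)^2, hsqb⟩
  have hRuW : Integrable (fun y => R (u y) * W y) := by
    refine key _ hRuAesm ⟨Λ * (c2 - c1)^2, fun y => (hRb _ (hub y)).trans ?_⟩
    exact mul_le_mul_of_nonneg_left (hsq y) hΛ
  have hid : mollify ω ε (fun y => p (f y)) x - p m = ∫ y, R (u y) * W y := by
    have h1 : (fun y => R (u y) * W y)
        = fun y => p (u y) * W y - p m * W y - deriv p m * ((u y - m) * W y) := by
      funext y; simp only [hRdef]; ring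
    have hpmW : Integrable (fun y => p m * W y) :=
      key _ aestronglyMeasurable_const ⟨|p m|, fun y => le_refl _⟩
    have hsub1 : Integrable (fun y => p (u y) * W y - p m * W y) volume := hpuW.sub hpmW
    have hsub2 : Integrable (fun y => deriv p m * ((u y - m) * W y)) volume := humW.const_mul _
    rw [h1, integral_sub hsub1 hsub2, integral_sub hpuW hpmW,
      integral_const_mul, integral_const_mul, hW1, hmz, mul_one, mul_zero, sub_zero]
    rfl
  have habs : |mollify ω ε (fun y => p (f y)) x - p m| ≤ Λ * ∫ y, (u y - m)^2 * W y := by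
    rw [hid]
    calc |∫ y, R (u y) * W y| ≤ ∫ y, |R (u y) * W y| := by
          simpa only [Real.norm_eq_abs] using
            norm_integral_le_integral_norm (μ := volume) (fun y => R (u y) * W y)
      _ ≤ ∫ y, Λ * ((u y - m)^2 * W y) := by
          apply integral_mono hRuW.abs (hsqW.const_mul Λ)
          intro y
          dsimp only
          rw [abs_mul, abs_of_nonneg (hWnn y), ← mul_assoc]
          exact mul_le_mul_of_nonneg_right (hRb _ (hub y)) (hWnn y)
      _ = Λ * ∫ y, (u y - m)^2 * W y := integral_const_mul _ _
  have hcx' : ∃ C, ∀ y, |(u y - f x)^2| ≤ C := by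
    refine ⟨(c2 - c1)^2, fun y => ?_⟩
    rw [abs_of_nonneg (sq_nonneg _), ← sq_abs (u y - f x)]
    apply pow_le_pow_left₀ (abs_nonneg _)
    have h1 := hub y; have h2 := hfb x
    rw [abs_sub_le_iff]; constructor <;> linarith [h1.1, h1.2, h2.1, h2.2]
  have hcxW : Integrable (fun y => (u y - f x)^2 * W y) :=
    key _ ((hum.sub aestronglyMeasurable_const).pow 2) hcx'
  have hvar : (∫ y, (u y - m)^2 * W y) ≤ ∫ y, (u y - f x)^2 * W y := by
    have expand : (fun y => (u y - f x)^2 * W y)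
        = fun y => ((u y - m)^2 * W y + (2*(m - f x)) * ((u y - m) * W y))
            + (m - f x)^2 * W y := by
      funext y; ring
    have hmfW : Integrable (fun y => (m - f x)^2 * W y) :=
      key _ aestronglyMeasurable_const ⟨|(m - f x)^2|, fun y => le_refl _⟩
    have hadd1 : Integrable (fun y => (u y - m)^2 * W y + (2*(m - f x)) * ((u y - m) * W y))
        volume := hsqW.add (humW.const_mul _)
    have hadd2 : Integrable (fun y => (2*(m - f x)) * ((u y - m) * W y)) volume :=
      humW.const_mul _
    rw [expand, integral_add hadd1 hmfW,
      integral_add hsqW hadd2, integral_const_mul, hmz, hconst ((m - f x)^2),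
      mul_zero, add_zero]
    nlinarith [sq_nonneg (m - f x)]
  calc |mollify ω ε (fun y => p (f y)) x - p m| ≤ Λ * ∫ y, (u y - m)^2 * W y := habs
    _ ≤ Λ * ∫ y, (u y - f x)^2 * W y := mul_le_mul_of_nonneg_left hvar hΛ
    _ = Λ * ∫ y, (f (x - y) - f x)^2 * scaledMollifier ω ε y := rfl

/-- Quantitative mollification-commutation with the pressure law in 3D,
`L^{6/5}` version: under the `B^{1/2,∞}_{12/5}` translation bound with constant `M`,
`‖(p(ϱ))^ε - p(ϱ^ε)‖_{L^∞(0,T;L^{6/5}(𝕋³))} ≤ C M² ε`. -/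
theorem pressure_commutation_L65_3d
    (ω : Ed 3 → ℝ) (hω : IsStdMollifier ω)
    (p : ℝ → ℝ) (hp : ContDiffOn ℝ 2 p (Set.Ioi 0))
    (c1 c2 : ℝ) (hc1 : 0 < c1) (hc12 : c1 ≤ c2) :
    ∃ C : ℝ, 0 < C ∧
      ∀ (M ε₀ T : ℝ), 0 ≤ M → 0 < ε₀ → 0 < T →
        ∀ ϱ : ℝ → Ed 3 → ℝ,
          (∀ t, ZPeriodic (ϱ t)) →
          (∀ t, AEStronglyMeasurable (ϱ t) volume) →
          (∀ t x, ϱ t x ∈ Set.Icc c1 c2) →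
          (∀ t ∈ Set.Ioo (0 : ℝ) T, ∀ h : Ed 3, 0 < ‖h‖ → ‖h‖ < ε₀ →
            eLpNorm (fun x => ϱ t (x + h) - ϱ t x) (ENNReal.ofReal (12 / 5))
                (volume.restrict (cube 3)) ≤
              ENNReal.ofReal (M * ‖h‖ ^ ((1 : ℝ) / 2))) →
          ∀ ε : ℝ, 0 < ε → ε < ε₀ → ∀ t ∈ Set.Ioo (0 : ℝ) T,
            eLpNorm
                (fun x => mollify ω ε (fun y => p (ϱ t y)) x - p (mollify ω ε (ϱ t) x))
                (ENNReal.ofReal (6 / 5)) (volume.restrict (cube 3)) ≤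
              ENNReal.ofReal (C * M ^ 2 * ε) := by
  obtain ⟨Λ, hΛnn, hTay⟩ := taylor_bound p hp c1 c2 hc1 hc12
  refine ⟨Λ + 1, by linarith, ?_⟩
  intro M ε₀ T hM hε₀ hTpos ϱ hper hmeas hicc htrans ε hε hεε₀ t ht
  have hfm := hmeas t
  have hfb := hicc t
  have htt := htrans t ht
  set f := ϱ t with hfdef
  -- measurability of p ∘ f via clamping
  have hsub : Set.Icc c1 c2 ⊆ Set.Ioi 0 := fun s hs => lt_of_lt_of_le hc1 hs.1
  have hpc : ContinuousOn p (Set.Icc c1 c2) := (hp.continuousOn).mono hsub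
  have hclampc : Continuous (fun s : ℝ => min c2 (max c1 s)) :=
    continuous_const.min (continuous_const.max continuous_id)
  have hclampmem : ∀ s : ℝ, min c2 (max c1 s) ∈ Set.Icc c1 c2 :=
    fun s => ⟨le_min hc12 (le_max_left _ _), min_le_left _ _⟩
  have hPcont : Continuous (fun s => p (min c2 (max c1 s))) :=
    hpc.comp_continuous hclampc hclampmem
  have hpfm : AEStronglyMeasurable (fun y => p (f y)) volume := by
    have he : (fun y => p (f y)) = (fun s => p (min c2 (max c1 s))) ∘ f := by
      funext y
      have h1 := hfb y
      simp only [Function.comp_apply, max_eq_right h1.1, min_eq_right h1.2]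
    rw [he]
    exact hPcont.comp_aestronglyMeasurable hfm
  obtain ⟨K, hK⟩ := (isCompact_Icc (a := c1) (b := c2)).exists_bound_of_continuousOn hpc
  have hpb : ∀ s ∈ Set.Icc c1 c2, |p s| ≤ K := fun s hs => by
    simpa [Real.norm_eq_abs] using hK s hs
  have hpt := pointwise_bound hω hε p hpb hΛnn hTay f hfm hpfm hfb
  -- ENNReal setup
  set W := scaledMollifier ω ε with hW
  set We : Ed 3 → ℝ≥0∞ := fun y => ENNReal.ofReal (W y) with hWe
  have hWem : Measurable We := (moll_cont hω).measurable.ennreal_ofReal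
  have hWetop : ∀ y, We y ≠ ∞ := fun y => ENNReal.ofReal_ne_top
  have hWe1 : (∫⁻ y, We y) = 1 := by
    rw [hWe]
    simp only
    rw [← ofReal_integral_eq_lintegral_ofReal (moll_integrable hω hε)
      (ae_of_all _ (moll_nonneg hω hε)), moll_integral hω hε, ENNReal.ofReal_one]
  set D : Ed 3 → Ed 3 → ℝ≥0∞ := fun x y => ENNReal.ofReal ‖f (x - y) - f x‖ with hD
  set L := ENNReal.ofReal Λ with hL
  set B := ENNReal.ofReal (M * ε ^ ((1:ℝ)/2)) ^ ((12:ℝ)/5) with hB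
  have hBtop : B ≠ ∞ := ENNReal.rpow_ne_top_of_nonneg (by norm_num) ENNReal.ofReal_ne_top
  set g := fun x => mollify ω ε (fun y => p (f y)) x - p (mollify ω ε f x) with hg
  have hDm : ∀ x, AEMeasurable (D x) volume := by
    intro x
    have h1 : AEStronglyMeasurable (fun y => f (x - y)) volume :=
      hfm.comp_quasiMeasurePreserving
        (Measure.measurePreserving_sub_left (volume : Measure (Ed 3)) x).quasiMeasurePreserving
    exact ((h1.sub aestronglyMeasurable_const).norm.aemeasurable).ennreal_ofReal
  have key1 : ∀ x, (‖g x‖₊ : ℝ≥0∞) ^ ((6:ℝ)/5) ≤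
      L ^ ((6:ℝ)/5) * ∫⁻ y, D x y ^ ((12:ℝ)/5) * We y := by
    intro x
    have hIint : Integrable (fun y => (f (x - y) - f x)^2 * W y) volume :=
      sq_diff_integrable hω hε f hfm hfb x
    have hInn : 0 ≤ᵐ[volume] fun y => (f (x - y) - f x)^2 * W y :=
      ae_of_all _ fun y => mul_nonneg (sq_nonneg _) (moll_nonneg hω hε y)
    have hIof : ENNReal.ofReal (∫ y, (f (x - y) - f x)^2 * W y)
        = ∫⁻ y, D x y ^ (2:ℝ) * We y := by
      rw [ofReal_integral_eq_lintegral_ofReal hIint hInn]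
      apply lintegral_congr
      intro y
      rw [ENNReal.ofReal_mul (sq_nonneg _)]
      congr 1
      rw [show (f (x - y) - f x)^2 = ‖f (x - y) - f x‖^2 by
        rw [Real.norm_eq_abs, sq_abs]]
      rw [ENNReal.ofReal_pow (norm_nonneg _), hD]
      rw [← ENNReal.rpow_natCast]
      norm_num
    have hckey : (∫⁻ y, D x y ^ (2:ℝ) * We y) ≤
        (∫⁻ y, D x y ^ ((12:ℝ)/5) * We y) ^ ((5:ℝ)/6) := by
      have hconj : Real.HolderConjugate (6/5) 6 := ⟨by norm_num, by norm_num, by norm_num⟩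
      have hf1 : AEMeasurable (fun y => D x y ^ (2:ℝ) * We y ^ ((5:ℝ)/6)) volume :=
        ((hDm x).pow_const _).mul (hWem.pow_const _).aemeasurable
      have hg1 : AEMeasurable (fun y => We y ^ ((1:ℝ)/6)) volume :=
        (hWem.pow_const _).aemeasurable
      have h := ENNReal.lintegral_mul_le_Lp_mul_Lq volume hconj hf1 hg1
      have e1 : ∀ y : Ed 3, (D x y ^ (2:ℝ) * We y ^ ((5:ℝ)/6)) * We y ^ ((1:ℝ)/6)
          = D x y ^ (2:ℝ) * We y := by
        intro y
        rw [mul_assoc, ← ENNReal.rpow_add_of_nonneg _ _ (by norm_num) (by norm_num)]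
        norm_num
      have e2 : ∀ y : Ed 3, (D x y ^ (2:ℝ) * We y ^ ((5:ℝ)/6)) ^ ((6:ℝ)/5)
          = D x y ^ ((12:ℝ)/5) * We y := by
        intro y
        rw [ENNReal.mul_rpow_of_nonneg _ _ (by norm_num), ← ENNReal.rpow_mul,
          ← ENNReal.rpow_mul]
        norm_num
      have e3 : ∀ y : Ed 3, (We y ^ ((1:ℝ)/6)) ^ (6:ℝ) = We y := by
        intro y
        rw [← ENNReal.rpow_mul]
        norm_num
      calc (∫⁻ y, D x y ^ (2:ℝ) * We y)
          = ∫⁻ y, (D x y ^ (2:ℝ) * We y ^ ((5:ℝ)/6)) * We y ^ ((1:ℝ)/6) :=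
            (lintegral_congr e1).symm
        _ ≤ (∫⁻ y, (D x y ^ (2:ℝ) * We y ^ ((5:ℝ)/6)) ^ ((6:ℝ)/5)) ^ (1/((6:ℝ)/5))
            * (∫⁻ y, (We y ^ ((1:ℝ)/6)) ^ (6:ℝ)) ^ (1/(6:ℝ)) := h
        _ = (∫⁻ y, D x y ^ ((12:ℝ)/5) * We y) ^ ((5:ℝ)/6) * 1 := by
            rw [lintegral_congr e2, lintegral_congr e3, hWe1]
            norm_num
        _ = (∫⁻ y, D x y ^ ((12:ℝ)/5) * We y) ^ ((5:ℝ)/6) := mul_one _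
    calc (‖g x‖₊ : ℝ≥0∞) ^ ((6:ℝ)/5)
        = ENNReal.ofReal |g x| ^ ((6:ℝ)/5) := by rw [← Real.enorm_eq_ofReal_abs]; rfl
      _ ≤ ENNReal.ofReal (Λ * ∫ y, (f (x - y) - f x)^2 * W y) ^ ((6:ℝ)/5) :=
          ENNReal.rpow_le_rpow (ENNReal.ofReal_le_ofReal (hpt x)) (by norm_num)
      _ = (L * ∫⁻ y, D x y ^ (2:ℝ) * We y) ^ ((6:ℝ)/5) := by
          rw [ENNReal.ofReal_mul hΛnn, hIof]
      _ = L ^ ((6:ℝ)/5) * (∫⁻ y, D x y ^ (2:ℝ) * We y) ^ ((6:ℝ)/5) :=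
          ENNReal.mul_rpow_of_nonneg _ _ (by norm_num)
      _ ≤ L ^ ((6:ℝ)/5) * ((∫⁻ y, D x y ^ ((12:ℝ)/5) * We y) ^ ((5:ℝ)/6)) ^ ((6:ℝ)/5) :=
          mul_le_mul_right (ENNReal.rpow_le_rpow hckey (by norm_num)) _
      _ = L ^ ((6:ℝ)/5) * ∫⁻ y, D x y ^ ((12:ℝ)/5) * We y := by
          rw [← ENNReal.rpow_mul]
          norm_num
  have hLtop : L ^ ((6:ℝ)/5) ≠ ∞ :=
    ENNReal.rpow_ne_top_of_nonneg (by norm_num) ENNReal.ofReal_ne_top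
  have step1 : (∫⁻ x in cube 3, (‖g x‖₊ : ℝ≥0∞) ^ ((6:ℝ)/5)) ≤
      L ^ ((6:ℝ)/5) * ∫⁻ x in cube 3, ∫⁻ y, D x y ^ ((12:ℝ)/5) * We y := by
    rw [← lintegral_const_mul' _ _ hLtop]
    exact lintegral_mono fun x => key1 x
  -- replace f by a measurable representative and swap integrals
  obtain ⟨f₀, hf₀sm, hf₀e⟩ := hfm
  have hf₀meas : Measurable f₀ := hf₀sm.measurable
  obtain ⟨N, hNsub, hNmeas, hN0⟩ := exists_measurable_superset_of_null (ae_iff.mp hf₀e)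
  set G : Ed 3 → Ed 3 → ℝ≥0∞ :=
    fun x y => ENNReal.ofReal ‖f₀ (x - y) - f₀ x‖ ^ ((12:ℝ)/5) * We y with hG
  have hswap_eq : (∫⁻ x in cube 3, ∫⁻ y, D x y ^ ((12:ℝ)/5) * We y)
      = ∫⁻ x in cube 3, ∫⁻ y, G x y := by
    apply lintegral_congr_ae
    filter_upwards [ae_restrict_of_ae hf₀e] with x hx
    apply lintegral_congr_ae
    have hnull : volume {y : Ed 3 | x - y ∈ N} = 0 := by
      have h5 := (Measure.measurePreserving_sub_left (volume : Measure (Ed 3)) x).measure_preimage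
        hNmeas.nullMeasurableSet
      exact h5.trans hN0
    filter_upwards [measure_eq_zero_iff_ae_notMem.mp hnull] with y hy
    have h6 : f (x - y) = f₀ (x - y) := by
      by_contra hne
      exact hy (hNsub hne)
    rw [hD, hG]
    simp only
    rw [h6, hx]
  have hGm : Measurable (Function.uncurry G) := by
    apply Measurable.mul
    · apply Measurable.pow_const
      apply Measurable.ennreal_ofReal
      apply Measurable.norm
      exact (hf₀meas.comp (measurable_fst.sub measurable_snd)).sub (hf₀meas.comp measurable_fst)
    · exact hWem.comp measurable_snd
  have hswap : (∫⁻ x in cube 3, ∫⁻ y, G x y) = ∫⁻ y, ∫⁻ x in cube 3, G x y ∂volume :=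
    lintegral_lintegral_swap hGm.aemeasurable
  -- per-y bound
  have hy_bound : ∀ y : Ed 3, (∫⁻ x in cube 3, G x y) ≤ B * We y := by
    intro y
    have hpull : (∫⁻ x in cube 3, G x y)
        = (∫⁻ x in cube 3, ENNReal.ofReal ‖f₀ (x - y) - f₀ x‖ ^ ((12:ℝ)/5)) * We y :=
      lintegral_mul_const' _ _ (hWetop y)
    have hnull2 : volume {x : Ed 3 | x - y ∈ N} = 0 := by
      have h5 := (measurePreserving_sub_right (volume : Measure (Ed 3)) y).measure_preimage
        hNmeas.nullMeasurableSet
      exact h5.trans hN0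
    have hfeq : (∫⁻ x in cube 3, ENNReal.ofReal ‖f₀ (x - y) - f₀ x‖ ^ ((12:ℝ)/5))
        = ∫⁻ x in cube 3, ENNReal.ofReal ‖f (x - y) - f x‖ ^ ((12:ℝ)/5) := by
      apply lintegral_congr_ae
      filter_upwards [ae_restrict_of_ae hf₀e,
        ae_restrict_of_ae (measure_eq_zero_iff_ae_notMem.mp hnull2)] with x hx1 hx2
      have h6 : f (x - y) = f₀ (x - y) := by
        by_contra hne
        exact hx2 (hNsub hne)
      rw [h6, hx1]
    rw [hpull, hfeq]
    rcases le_or_gt ε ‖y‖ with hyε | hyε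
    · have hWy : W y = 0 := moll_zero hω hε y hyε
      have hWey : We y = 0 := by rw [hWe]; simp only [hWy, ENNReal.ofReal_zero]
      rw [hWey, mul_zero, mul_zero]
    · apply mul_le_mul_left
      rcases eq_or_ne y 0 with rfl | hy0
      · have hzero : ∀ x : Ed 3, ENNReal.ofReal ‖f (x - 0) - f x‖ ^ ((12:ℝ)/5) = 0 := by
          intro x
          rw [sub_zero, sub_self, norm_zero, ENNReal.ofReal_zero,
            ENNReal.zero_rpow_of_pos (by norm_num)]
        rw [lintegral_congr hzero, lintegral_zero]
        exact zero_le
      · have hny : 0 < ‖y‖ := norm_pos_iff.mpr hy0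
        have h1 := htt (-y) (by simpa using hny) (by rw [norm_neg]; exact hyε.trans hεε₀)
        rw [eLpNorm_eq_lintegral_rpow_enorm_toReal
          ((ENNReal.ofReal_pos.mpr (by norm_num)).ne') ENNReal.ofReal_ne_top,
          ENNReal.toReal_ofReal (by norm_num)] at h1
        have h2 := ENNReal.rpow_le_rpow h1 (by norm_num : (0:ℝ) ≤ 12/5)
        rw [← ENNReal.rpow_mul] at h2
        have h3 : (1 / (12/5 : ℝ)) * (12/5) = 1 := by norm_num
        rw [h3, ENNReal.rpow_one] at h2
        have h4 : (∫⁻ x in cube 3, ENNReal.ofReal ‖f (x - y) - f x‖ ^ ((12:ℝ)/5))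
            = ∫⁻ x in cube 3, (‖f (x + -y) - f x‖₊ : ℝ≥0∞) ^ ((12:ℝ)/5) := by
          apply lintegral_congr
          intro x
          rw [← sub_eq_add_neg, ofReal_norm]; rfl
        rw [h4]
        refine h2.trans ?_
        apply ENNReal.rpow_le_rpow _ (by norm_num : (0:ℝ) ≤ 12/5)
        apply ENNReal.ofReal_le_ofReal
        rw [norm_neg]
        exact mul_le_mul_of_nonneg_left
          (Real.rpow_le_rpow (norm_nonneg _) hyε.le (by norm_num)) hM
  have step2 : (∫⁻ y, ∫⁻ x in cube 3, G x y) ≤ B := by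
    calc (∫⁻ y, ∫⁻ x in cube 3, G x y) ≤ ∫⁻ y, B * We y := lintegral_mono hy_bound
      _ = B * ∫⁻ y, We y := lintegral_const_mul' _ _ hBtop
      _ = B := by rw [hWe1, mul_one]
  have htot : (∫⁻ x in cube 3, (‖g x‖₊ : ℝ≥0∞) ^ ((6:ℝ)/5)) ≤ L ^ ((6:ℝ)/5) * B := by
    refine step1.trans ?_
    rw [hswap_eq, hswap]
    exact mul_le_mul_right step2 _
  -- conclude
  rw [eLpNorm_eq_lintegral_rpow_enorm_toReal
    ((ENNReal.ofReal_pos.mpr (by norm_num : (0:ℝ) < 6/5)).ne') ENNReal.ofReal_ne_top,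
    ENNReal.toReal_ofReal (by norm_num : (0:ℝ) ≤ 6/5)]
  have h7 : (1 / (6/5 : ℝ)) = (5:ℝ)/6 := by norm_num
  rw [h7]
  calc (∫⁻ x in cube 3, (‖g x‖₊ : ℝ≥0∞) ^ ((6:ℝ)/5)) ^ ((5:ℝ)/6)
      ≤ (L ^ ((6:ℝ)/5) * B) ^ ((5:ℝ)/6) := ENNReal.rpow_le_rpow htot (by norm_num)
    _ = L * ENNReal.ofReal (M * ε ^ ((1:ℝ)/2)) ^ (2:ℝ) := by
        rw [ENNReal.mul_rpow_of_nonneg _ _ (by norm_num), ← ENNReal.rpow_mul, hB,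
          ← ENNReal.rpow_mul]
        norm_num
    _ = ENNReal.ofReal (Λ * (M ^ 2 * ε)) := by
        rw [ENNReal.rpow_two, ← ENNReal.ofReal_pow (mul_nonneg hM (Real.rpow_nonneg hε.le _)),
          ← ENNReal.ofReal_mul hΛnn]
        congr 2
        rw [mul_pow, ← Real.rpow_natCast (ε ^ ((1:ℝ)/2)) 2, ← Real.rpow_mul hε.le]
        norm_num
    _ ≤ ENNReal.ofReal ((Λ + 1) * M ^ 2 * ε) := by
        apply ENNReal.ofReal_le_ofReal
        nlinarith [sq_nonneg M, mul_nonneg (sq_nonneg M) hε.le]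
end
end
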